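/- arXiv:1902.09134 — 2 statements merged into one kernel-verified Lean document; each statement's English description precedes it below -/
import Mathlib

section
/- Let f'_{l,t1,t2}(w_1,…,w_l) = (∏_{i=1}^l w_i^{t1} / ∏_{i=1}^l (1+w_i)^{t2}) · ∏_{i<j} (w_i − w_j)^2. Then the partial integral g'_{l,t1,t2}(w_l) = ∫_0^∞ ⋯ ∫_0^∞ f'_{l,t1,t2} dw_1⋯dw_{l−1} equals Σ_{σ1,σ2 ∈ S_l} sign(σ1)sign(σ2) · (w_l^{t1+2l−σ1(l)−σ2(l)} / (1+w_l)^{t2}) · ∏_{i=1}^{l−1} B(t1+2l−σ1(i)−σ2(i)+1, t2−t1−2l−1+σ1(i)+σ2(i)), provided t1 ≥ 0 and t2 > t1 + 2l so that all Beta arguments are positive. -/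
/-!
The factor `∏_{i<j} (wᵢ - wⱼ)²` is the square of a Vandermonde determinant. Expanding both
copies by the Leibniz formula turns the integrand into a signed sum, over pairs of permutations,
of products of one-variable functions `t ^ e / (1 + t) ^ t2`. By Fubini each summand integrates
to a product of one-variable integrals, and the substitution `t = u⁻¹ - 1` turns each of these
into the Beta integral `∫₀¹ u ^ (t2 - e - 2) (1 - u) ^ e du`.
-/

open MeasureTheory Equiv

/-- The Beta function `B(x,y) = Γ(x)Γ(y)/Γ(x+y)`. -/
noncomputable def realBeta (x y : ℝ) : ℝ := Real.Gamma x * Real.Gamma y / Real.Gamma (x + y)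

open Set

theorem realBeta_comm (x y : ℝ) : realBeta x y = realBeta y x := by
  rw [realBeta, realBeta, mul_comm, add_comm]

theorem intervalIntegral_pow_mul_one_sub_pow (m n : ℕ) :
    ∫ x in (0 : ℝ)..1, x ^ m * (1 - x) ^ n = realBeta (m + 1) (n + 1) := by
  change _ = ProbabilityTheory.beta _ _
  rw [ProbabilityTheory.beta_eq_betaIntegralReal _ _ (by positivity) (by positivity),
    Complex.betaIntegral]
  push_cast
  simp only [add_sub_cancel_right, Complex.cpow_natCast]
  norm_cast
  rw [intervalIntegral.integral_ofReal, Complex.ofReal_re]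

theorem image_inv_sub_one_Ioo : (fun u : ℝ => u⁻¹ - 1) '' Ioo 0 1 = Ioi 0 := by
  ext t
  refine ⟨?_, fun ht => ⟨(1 + t)⁻¹, ⟨inv_pos.mpr (by linarith [mem_Ioi.mp ht]),
    inv_lt_one_of_one_lt₀ (by simpa using ht)⟩, by simp⟩⟩
  rintro ⟨u, ⟨hu0, hu1⟩, rfl⟩
  simpa using one_lt_inv₀ hu0 |>.mpr hu1

theorem hasDerivWithinAt_inv_sub_one {u : ℝ} (hu : u ∈ Ioo 0 1) :
    HasDerivWithinAt (fun u : ℝ => u⁻¹ - 1) (-(u ^ 2)⁻¹) (Ioo 0 1) u :=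
  ((hasDerivAt_inv hu.1.ne').sub_const 1).hasDerivWithinAt

theorem injective_inv_sub_one : Function.Injective fun u : ℝ => u⁻¹ - 1 :=
  sub_left_injective.comp inv_injective

theorem abs_deriv_smul_pow_div_one_add_pow (a m : ℕ) {u : ℝ} (hu : u ∈ Ioo 0 1) :
    |-(u ^ 2)⁻¹| • ((u⁻¹ - 1) ^ a / (1 + (u⁻¹ - 1)) ^ (a + 2 + m)) = u ^ m * (1 - u) ^ a := by
  have hu0 : u ≠ 0 := hu.1.ne'
  have h : u⁻¹ - 1 = (1 - u) / u := by field_simp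
  rw [abs_neg, abs_of_pos (by positivity), smul_eq_mul, add_sub_cancel, h, div_pow, inv_pow,
    pow_add, pow_add]
  field_simp

theorem integrableOn_Ioi_pow_div_one_add_pow {a b : ℕ} (hab : a + 2 ≤ b) :
    IntegrableOn (fun t : ℝ => t ^ a / (1 + t) ^ b) (Ioi 0) := by
  obtain ⟨m, rfl⟩ := Nat.exists_eq_add_of_le hab
  rw [← image_inv_sub_one_Ioo, integrableOn_image_iff_integrableOn_abs_deriv_smul
    measurableSet_Ioo (fun _ => hasDerivWithinAt_inv_sub_one) injective_inv_sub_one.injOn,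
    integrableOn_congr_fun (fun u hu => abs_deriv_smul_pow_div_one_add_pow a m hu)
    measurableSet_Ioo]
  exact (by fun_prop : Continuous fun u : ℝ => u ^ m * (1 - u) ^ a).integrableOn_Icc.mono_set
    Ioo_subset_Icc_self

theorem integral_Ioi_pow_div_one_add_pow {a b : ℕ} (hab : a + 2 ≤ b) :
    ∫ t in Ioi (0 : ℝ), t ^ a / (1 + t) ^ b = realBeta (a + 1) (b - a - 1) := by
  obtain ⟨m, rfl⟩ := Nat.exists_eq_add_of_le hab
  rw [← image_inv_sub_one_Ioo, integral_image_eq_integral_abs_deriv_smul measurableSet_Ioo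
    (fun _ => hasDerivWithinAt_inv_sub_one) injective_inv_sub_one.injOn,
    setIntegral_congr_fun measurableSet_Ioo (fun u hu => abs_deriv_smul_pow_div_one_add_pow a m hu),
    ← integral_Ioc_eq_integral_Ioo, ← intervalIntegral.integral_of_le zero_le_one,
    intervalIntegral_pow_mul_one_sub_pow, realBeta_comm]
  push_cast
  ring_nf

section PiProd

variable {ι E : Type*} [Fintype ι] [MeasurableSpace E] {μ : Measure E} [SigmaFinite μ]
  {s : Set E} {f : ι → E → ℝ}

theorem setIntegral_univ_pi_prod :
    ∫ v in univ.pi (fun _ => s), ∏ i, f i (v i) ∂Measure.pi (fun _ => μ) =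
      ∏ i, ∫ t in s, f i t ∂μ := by
  rw [Measure.restrict_pi_pi, integral_fintype_prod_eq_prod]

theorem IntegrableOn.univ_pi_prod (hf : ∀ i, IntegrableOn (f i) s μ) :
    IntegrableOn (fun v => ∏ i, f i (v i)) (univ.pi fun _ => s) (Measure.pi fun _ => μ) := by
  rw [IntegrableOn, Measure.restrict_pi_pi]
  exact Integrable.fintype_prod hf

end PiProd

theorem integrableOn_univ_pi_Ioi_prod_pow_div_one_add_pow {k b : ℕ} {a : Fin k → ℕ}
    (hab : ∀ i, a i + 2 ≤ b) :
    IntegrableOn (fun v : Fin k → ℝ => ∏ i, v i ^ a i / (1 + v i) ^ b) (univ.pi fun _ => Ioi 0) :=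
  IntegrableOn.univ_pi_prod fun i => integrableOn_Ioi_pow_div_one_add_pow (hab i)

theorem setIntegral_univ_pi_Ioi_prod_pow_div_one_add_pow {k b : ℕ} {a : Fin k → ℕ}
    (hab : ∀ i, a i + 2 ≤ b) :
    ∫ v in univ.pi fun _ => Ioi 0, ∏ i, v i ^ a i / (1 + v i) ^ b =
      ∏ i, realBeta (a i + 1) (b - a i - 1) :=
  setIntegral_univ_pi_prod.trans <|
    Finset.prod_congr rfl fun i _ => integral_Ioi_pow_div_one_add_pow (hab i)

theorem sq_sum_sign_mul_prod_pow_rev {R : Type*} [CommRing R] {n : ℕ} (w : Fin n → R) :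
    (∑ σ : Perm (Fin n), (Perm.sign σ : ℤ) * ∏ i, w i ^ ((σ i).rev : ℕ)) ^ 2 =
      ∏ i, ∏ j ∈ Finset.Ioi i, (w i - w j) ^ 2 := by
  have hdet : ∑ σ : Perm (Fin n), (Perm.sign σ : ℤ) * ∏ i, w i ^ ((σ i).rev : ℕ) =
      (Perm.sign (Fin.revPerm : Perm (Fin n)) : ℤ) * (Matrix.vandermonde w).det := by
    rw [← Matrix.det_permute', ← Matrix.det_transpose, Matrix.det_apply']
    rfl
  have hsign : ((Perm.sign (Fin.revPerm : Perm (Fin n)) : ℤ) : R) ^ 2 = 1 := by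
    rw [← Int.cast_pow, ← Units.val_pow_eq_pow_val, Int.units_sq, Units.val_one, Int.cast_one]
  rw [hdet, mul_pow, hsign, one_mul, Matrix.det_vandermonde, ← Finset.prod_pow]
  refine Finset.prod_congr rfl fun i _ => ?_
  rw [← Finset.prod_pow]
  exact Finset.prod_congr rfl fun j _ => by ring

/-- The paper's exponent `a + 2n - σ₁(i) - σ₂(i)`, with `σ(i) ∈ {1, …, n}` read as
`(σ i : ℕ) + 1`; the subtractions never truncate. -/
def permPairExponent {n : ℕ} (a : ℕ) (σ₁ σ₂ : Perm (Fin n)) (i : Fin n) : ℕ :=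
  a + 2 * n - ((σ₁ i : ℕ) + 1) - ((σ₂ i : ℕ) + 1)

theorem permPairExponent_eq {n : ℕ} (a : ℕ) (σ₁ σ₂ : Perm (Fin n)) (i : Fin n) :
    permPairExponent a σ₁ σ₂ i = a + ((σ₁ i).rev : ℕ) + ((σ₂ i).rev : ℕ) := by
  simp only [permPairExponent, Fin.val_rev]
  omega

theorem permPairExponent_add_two_le {n a b : ℕ} (h : a + 2 * n < b) (σ₁ σ₂ : Perm (Fin n))
    (i : Fin n) : permPairExponent a σ₁ σ₂ i + 2 ≤ b := by
  unfold permPairExponent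
  omega

theorem cast_permPairExponent {n : ℕ} (a : ℕ) (σ₁ σ₂ : Perm (Fin n)) (i : Fin n) :
    (permPairExponent a σ₁ σ₂ i : ℝ) = a + 2 * n - ((σ₁ i : ℕ) + 1) - ((σ₂ i : ℕ) + 1) := by
  rw [permPairExponent_eq, Nat.cast_add, Nat.cast_add, Fin.val_rev, Fin.val_rev,
    Nat.cast_sub (σ₁ i).isLt, Nat.cast_sub (σ₂ i).isLt]
  push_cast
  ring

theorem prod_pow_div_mul_prod_sub_sq {K : Type*} [Field K] {n : ℕ} (a b : ℕ) (w : Fin n → K) :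
    (∏ i, w i ^ a / (1 + w i) ^ b) * ∏ i, ∏ j ∈ Finset.Ioi i, (w i - w j) ^ 2 =
      ∑ σ₁ : Perm (Fin n), ∑ σ₂ : Perm (Fin n), (Perm.sign σ₁ : ℤ) * (Perm.sign σ₂ : ℤ) *
        ∏ i, w i ^ permPairExponent a σ₁ σ₂ i / (1 + w i) ^ b := by
  rw [← sq_sum_sign_mul_prod_pow_rev, sq, Finset.sum_mul_sum, Finset.mul_sum]
  refine Finset.sum_congr rfl fun σ₁ _ => ?_
  rw [Finset.mul_sum]
  refine Finset.sum_congr rfl fun σ₂ _ => ?_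
  simp only [permPairExponent_eq, pow_add, div_eq_mul_inv, Finset.prod_mul_distrib]
  ring

theorem stmt7_general (k t1 t2 : ℕ) (ht : t1 + 2 * (k + 1) < t2) (x : ℝ) :
    (∫ v in Set.univ.pi (fun _ : Fin k => Set.Ioi (0 : ℝ)),
        (∏ i : Fin (k + 1), ((Fin.snoc v x : Fin (k + 1) → ℝ) i) ^ t1 / (1 + (Fin.snoc v x : Fin (k + 1) → ℝ) i) ^ t2) *
          ∏ i : Fin (k + 1), ∏ j ∈ Finset.Ioi i, ((Fin.snoc v x : Fin (k + 1) → ℝ) i - (Fin.snoc v x : Fin (k + 1) → ℝ) j) ^ 2) =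
      ∑ σ1 : Equiv.Perm (Fin (k + 1)), ∑ σ2 : Equiv.Perm (Fin (k + 1)),
        ((Equiv.Perm.sign σ1 : ℤ) : ℝ) * ((Equiv.Perm.sign σ2 : ℤ) : ℝ) *
          (x ^ (t1 + 2 * (k + 1) - ((σ1 (Fin.last k) : ℕ) + 1) - ((σ2 (Fin.last k) : ℕ) + 1)) /
            (1 + x) ^ t2) *
          ∏ i : Fin k,
            realBeta
              ((t1 + 2 * (k + 1) - ((σ1 i.castSucc : ℕ) + 1) - ((σ2 i.castSucc : ℕ) + 1) : ℕ) + 1)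
              ((t2 : ℝ) - t1 - 2 * (k + 1) - 1 +
                (((σ1 i.castSucc : ℕ) : ℝ) + 1) + (((σ2 i.castSucc : ℕ) : ℝ) + 1)) := by
  set e := permPairExponent (n := k + 1) t1
  have he : ∀ σ₁ σ₂ i, e σ₁ σ₂ i + 2 ≤ t2 := permPairExponent_add_two_le ht
  have hint : ∀ σ₁ σ₂, IntegrableOn
      (fun v : Fin k → ℝ => ∏ i, v i ^ e σ₁ σ₂ i.castSucc / (1 + v i) ^ t2) (univ.pi fun _ => Ioi 0) :=
    fun σ₁ σ₂ => integrableOn_univ_pi_Ioi_prod_pow_div_one_add_pow fun i => he σ₁ σ₂ _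
  calc _ = ∫ v in univ.pi fun _ : Fin k => Ioi (0 : ℝ), ∑ σ₁, ∑ σ₂,
        (Perm.sign σ₁ : ℤ) * (Perm.sign σ₂ : ℤ) * (x ^ e σ₁ σ₂ (Fin.last k) / (1 + x) ^ t2) *
          ∏ i : Fin k, v i ^ e σ₁ σ₂ i.castSucc / (1 + v i) ^ t2 := by
        refine setIntegral_congr_fun (.univ_pi fun _ => measurableSet_Ioi) fun v _ => ?_
        rw [prod_pow_div_mul_prod_sub_sq]
        simp only [Fin.prod_univ_castSucc, Fin.snoc_castSucc, Fin.snoc_last]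
        exact Finset.sum_congr rfl fun σ₁ _ => Finset.sum_congr rfl fun σ₂ _ => by ring
    _ = ∑ σ₁, ∑ σ₂, (Perm.sign σ₁ : ℤ) * (Perm.sign σ₂ : ℤ) *
          (x ^ e σ₁ σ₂ (Fin.last k) / (1 + x) ^ t2) *
          ∏ i : Fin k, realBeta (e σ₁ σ₂ i.castSucc + 1) (t2 - e σ₁ σ₂ i.castSucc - 1) := by
        rw [integral_finsetSum _ fun σ₁ _ =>
          integrable_finsetSum _ fun σ₂ _ => (hint σ₁ σ₂).const_mul _]
        refine Finset.sum_congr rfl fun σ₁ _ => ?_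
        rw [integral_finsetSum _ fun σ₂ _ => (hint σ₁ σ₂).const_mul _]
        refine Finset.sum_congr rfl fun σ₂ _ => ?_
        rw [integral_const_mul, setIntegral_univ_pi_Ioi_prod_pow_div_one_add_pow fun i => he σ₁ σ₂ _]
    _ = _ := by
        refine Finset.sum_congr rfl fun σ₁ _ => Finset.sum_congr rfl fun σ₂ _ =>
          congrArg _ <| Finset.prod_congr rfl fun i _ => congrArg (realBeta _) ?_
        rw [cast_permPairExponent]
        push_cast
        ring

/-- With `l = k+1 ≥ 1`, `f'_{l,t1,t2}(w₁,…,w_l) = (∏ wᵢ^{t1}/(1+wᵢ)^{t2}) ∏_{i<j}(wᵢ−wⱼ)²`,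
and `t2 > t1 + 2l`, the partial integral
`g'_{l,t1,t2}(w_l) = ∫_{(0,∞)^{l−1}} f' dw₁⋯dw_{l−1}` equals
`Σ_{σ₁,σ₂ ∈ S_l} sign(σ₁)sign(σ₂) · w_l^{t1+2l−σ₁(l)−σ₂(l)}/(1+w_l)^{t2}
  · ∏_{i=1}^{l−1} B(t1+2l−σ₁(i)−σ₂(i)+1, t2−t1−2l−1+σ₁(i)+σ₂(i))`
(permutations are `Fin (k+1)`-valued, so `σ(i)` in `{1,…,l}` corresponds to `(σ i).val + 1`). -/
theorem stmt7 (k t1 t2 : ℕ) (ht : t1 + 2 * (k + 1) < t2) (x : ℝ) (hx : 0 < x) :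
    (∫ v in Set.univ.pi (fun _ : Fin k => Set.Ioi (0 : ℝ)),
        (∏ i : Fin (k + 1), ((Fin.snoc v x : Fin (k + 1) → ℝ) i) ^ t1 / (1 + (Fin.snoc v x : Fin (k + 1) → ℝ) i) ^ t2) *
          ∏ i : Fin (k + 1), ∏ j ∈ Finset.Ioi i, ((Fin.snoc v x : Fin (k + 1) → ℝ) i - (Fin.snoc v x : Fin (k + 1) → ℝ) j) ^ 2) =
      ∑ σ1 : Equiv.Perm (Fin (k + 1)), ∑ σ2 : Equiv.Perm (Fin (k + 1)),
        ((Equiv.Perm.sign σ1 : ℤ) : ℝ) * ((Equiv.Perm.sign σ2 : ℤ) : ℝ) *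
          (x ^ (t1 + 2 * (k + 1) - ((σ1 (Fin.last k) : ℕ) + 1) - ((σ2 (Fin.last k) : ℕ) + 1)) /
            (1 + x) ^ t2) *
          ∏ i : Fin k,
            realBeta
              ((t1 + 2 * (k + 1) - ((σ1 i.castSucc : ℕ) + 1) - ((σ2 i.castSucc : ℕ) + 1) : ℕ) + 1)
              ((t2 : ℝ) - t1 - 2 * (k + 1) - 1 +
                (((σ1 i.castSucc : ℕ) : ℝ) + 1) + (((σ2 i.castSucc : ℕ) : ℝ) + 1)) :=
  stmt7_general k t1 t2 ht x
end

section
/- With g'_{l,t1,t2} defined as the (l−1)-fold integral of f'_{l,t1,t2}(w_1,…,w_l) over w_1,…,w_{l−1} ∈ (0,∞), the functional identity g'_{l,t1,t2}(1/w) = w^2 · g'_{l,t1',t2}(w) holds for all w > 0, where t1' = t2 − t1 − 2l. -/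
/-!
Substitute `vᵢ ↦ vᵢ⁻¹` in the `l - 1` integration variables; the Jacobian is `∏ vᵢ⁻²`.
After inverting every coordinate, the fixed last one included, the integrand becomes
`f'_{l,t1',t2}` times `∏ xᵢ⁻²` over all `l` coordinates: each
`(xᵢ⁻¹ - xⱼ⁻¹)² = (xᵢ - xⱼ)² / (xᵢ² xⱼ²)` puts `l - 1` factors `xᵢ⁻²` on every coordinate,
and `xᵢ^{-t1} (1 + xᵢ⁻¹)^{-t2} = xᵢ^{t2-t1} (1 + xᵢ)^{-t2}`, so the total exponent of `xᵢ`
is `t2 - t1 - 2l`. The Jacobian cancels these factors except at the last coordinate `w`,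
whose missing `w⁻²` is the `w²` of the identity.
-/

open MeasureTheory Finset

/-- `g'_{l,t1,t2}(x)` for `l = k+1`: the `(l−1)`-fold integral over `(0,∞)^{l−1}` of
`f'_{l,t1,t2}(w₁,…,w_{l−1}, x) = ∏ᵢ wᵢ^{t1}(1+wᵢ)^{−t2} · ∏_{i<j}(wᵢ−wⱼ)²`,
where the last variable is fixed to `x`. -/
noncomputable def gAux (k t1 t2 : ℕ) (x : ℝ) : ℝ :=
  ∫ v in Set.univ.pi (fun _ : Fin k => Set.Ioi (0 : ℝ)),
    (∏ i : Fin (k + 1), ((Fin.snoc v x : Fin (k + 1) → ℝ) i) ^ t1 /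
        (1 + (Fin.snoc v x : Fin (k + 1) → ℝ) i) ^ t2) *
      ∏ i : Fin (k + 1), ∏ j ∈ Finset.Ioi i,
        ((Fin.snoc v x : Fin (k + 1) → ℝ) i - (Fin.snoc v x : Fin (k + 1) → ℝ) j) ^ 2

theorem Fin.prod_prod_Ioi_mul {M : Type*} [CommMonoid M] {n : ℕ} (c : Fin n → M) :
    ∏ i, ∏ j ∈ Ioi i, c i * c j = ∏ i, c i ^ (n - 1) := by
  have h_swap : ∏ i, ∏ j ∈ Ioi i, c j = ∏ j, ∏ _i ∈ Iio j, c j :=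
    prod_comm' fun i j => by simp
  simp_rw [prod_mul_distrib]
  rw [h_swap, ← prod_mul_distrib]
  refine prod_congr rfl fun i _ => ?_
  rw [Finset.prod_const, Finset.prod_const, ← pow_add, Fin.card_Ioi, Fin.card_Iio]
  congr 1
  omega

theorem Fin.prod_prod_Ioi_inv_sub_inv_sq {K : Type*} [Field K] {n : ℕ} {x : Fin n → K}
    (hx : ∀ i, x i ≠ 0) :
    ∏ i, ∏ j ∈ Ioi i, ((x i)⁻¹ - (x j)⁻¹) ^ 2 =
      (∏ i, ((x i ^ 2)⁻¹) ^ (n - 1)) * ∏ i, ∏ j ∈ Ioi i, (x i - x j) ^ 2 := by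
  rw [← Fin.prod_prod_Ioi_mul, ← prod_mul_distrib]
  refine prod_congr rfl fun i _ => ?_
  rw [← prod_mul_distrib]
  refine prod_congr rfl fun j _ => ?_
  rw [inv_sub_inv (hx i) (hx j)]
  field_simp
  ring

theorem inv_pow_div_one_add_inv_pow_mul {t₁ t₁' t₂ n : ℕ} (ht : t₁ + t₁' + 2 * n = t₂)
    {x : ℝ} (hx : 0 < x) :
    x⁻¹ ^ t₁ / (1 + x⁻¹) ^ t₂ * ((x ^ 2)⁻¹) ^ n = x ^ t₁' / (1 + x) ^ t₂ := by
  subst ht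
  have : (1 : ℝ) + x⁻¹ = (1 + x) / x := by field_simp; ring
  rw [this, div_pow, inv_pow, inv_pow, ← pow_mul]
  field_simp
  ring

theorem setIntegral_univ_pi_Ioi_comp_inv {ι : Type*} [Fintype ι] (g : (ι → ℝ) → ℝ) :
    ∫ v in Set.univ.pi fun _ => Set.Ioi 0, g v =
      ∫ v in Set.univ.pi fun _ => Set.Ioi 0, (∏ i, (v i ^ 2)⁻¹) * g v⁻¹ := by
  set s : Set (ι → ℝ) := Set.univ.pi fun _ => Set.Ioi 0
  have hs : MeasurableSet s := MeasurableSet.univ_pi fun _ => measurableSet_Ioi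
  have h_image : Inv.inv '' s = s := by
    rw [Set.image_inv_eq_inv]
    ext v
    simp [s]
  have h_deriv : ∀ v ∈ s, HasFDerivWithinAt Inv.inv
      (ContinuousLinearMap.pi fun i =>
        (ContinuousLinearMap.toSpanSingleton ℝ (-(v i ^ 2)⁻¹)).comp
          (ContinuousLinearMap.proj i)) s v := fun v hv =>
    (hasFDerivAt_pi.2 fun i =>
      (hasDerivAt_inv (hv i trivial).ne').hasFDerivAt.comp v
        (hasFDerivAt_apply i v)).hasFDerivWithinAt
  calc ∫ v in s, g v = ∫ v in Inv.inv '' s, g v := by rw [h_image]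
    _ = _ := integral_image_eq_integral_abs_det_fderiv_smul volume hs h_deriv
      inv_injective.injOn g
    _ = ∫ v in s, (∏ i, (v i ^ 2)⁻¹) * g v⁻¹ := by
      refine setIntegral_congr_fun hs fun v hv => ?_
      simp only [ContinuousLinearMap.det_pi, ContinuousLinearMap.det_toSpanSingleton, abs_prod,
        abs_neg, smul_eq_mul]
      congr 1
      exact prod_congr rfl fun i _ => abs_of_pos (inv_pos.2 (pow_pos (hv i trivial) 2))

/-- The paper's `f'_{n,t1,t2}`. -/
noncomputable def betaPrimeDensity {n : ℕ} (t₁ t₂ : ℕ) (x : Fin n → ℝ) : ℝ :=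
  (∏ i, x i ^ t₁ / (1 + x i) ^ t₂) * ∏ i, ∏ j ∈ Ioi i, (x i - x j) ^ 2

theorem prod_inv_sq_mul_betaPrimeDensity_inv {n t₁ t₁' t₂ : ℕ} (ht : t₁ + t₁' + 2 * n = t₂)
    {x : Fin n → ℝ} (hx : ∀ i, 0 < x i) :
    (∏ i, (x i ^ 2)⁻¹) * betaPrimeDensity t₁ t₂ x⁻¹ = betaPrimeDensity t₁' t₂ x := by
  cases n with
  | zero => simp [betaPrimeDensity]
  | succ m =>
    rw [betaPrimeDensity, betaPrimeDensity]
    simp only [Pi.inv_apply]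
    rw [Fin.prod_prod_Ioi_inv_sub_inv_sq fun i => (hx i).ne', ← mul_assoc, ← mul_assoc,
      ← prod_mul_distrib, ← prod_mul_distrib]
    congr 1
    refine prod_congr rfl fun i _ => ?_
    rw [← inv_pow_div_one_add_inv_pow_mul ht (hx i), Nat.add_sub_cancel, pow_succ' _ m]
    ring

theorem gAux_eq_setIntegral_betaPrimeDensity (k t₁ t₂ : ℕ) (x : ℝ) :
    gAux k t₁ t₂ x = ∫ v in Set.univ.pi fun _ => Set.Ioi 0,
      betaPrimeDensity t₁ t₂ (Fin.snoc v x : Fin (k + 1) → ℝ) :=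
  rfl

/-- The functional identity `g'_{l,t1,t2}(1/w) = w² · g'_{l,t1',t2}(w)` for all `w > 0`,
where `t1' = t2 − t1 − 2l` and `l = k+1`. -/
theorem stmt8 (k t1 t2 : ℕ) (ht : t1 + 2 * (k + 1) < t2) (w : ℝ) (hw : 0 < w) :
    gAux k t1 t2 (1 / w) = w ^ 2 * gAux k (t2 - t1 - 2 * (k + 1)) t2 w := by
  have ht' : t1 + (t2 - t1 - 2 * (k + 1)) + 2 * (k + 1) = t2 := by omega
  rw [gAux_eq_setIntegral_betaPrimeDensity, gAux_eq_setIntegral_betaPrimeDensity,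
    setIntegral_univ_pi_Ioi_comp_inv, ← integral_const_mul]
  refine setIntegral_congr_fun (MeasurableSet.univ_pi fun _ => measurableSet_Ioi) fun v hv => ?_
  have h_pos : ∀ i, 0 < (Fin.snoc v w : Fin (k + 1) → ℝ) i :=
    Fin.lastCases (by simpa using hw) fun i => by simpa using hv i trivial
  have h_snoc : (Fin.snoc v⁻¹ (1 / w) : Fin (k + 1) → ℝ) = (Fin.snoc v w)⁻¹ := by
    rw [one_div]; exact (Fin.comp_snoc _ _ _).symm
  rw [← prod_inv_sq_mul_betaPrimeDensity_inv ht' h_pos, h_snoc, Fin.prod_univ_castSucc]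
  simp only [Fin.snoc_castSucc, Fin.snoc_last]
  field_simp
end
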